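/- arXiv:2012.12932 — 6 statements merged into one kernel-verified Lean document; each statement's English description precedes it below -/
import Mathlib

section
/- Let L ⊆ Σ* be a prefix-closed language and K ⊆ L a prefix-closed language. Then the union K↑ of all prefix-closed sublanguages of K that are both controllable with respect to L and Σ_uc and normal with respect to Σ_o and L is itself prefix-closed, controllable with respect to L and Σ_uc, and normal with respect to Σ_o and L; hence K↑ is the unique supremal controllable and normal prefix-closed sublanguage of K. -/
attribute [local instance] Classical.propDecidable

noncomputable section

namespace RobustDES

variable {S : Type}

/-- A language is prefix-closed if every prefix of a member is a member. -/
def PrefixClosed (K : Set (List S)) : Prop :=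
  ∀ u v : List S, u ++ v ∈ K → u ∈ K

/-- Natural projection `P_{ΣΣo}` erasing events not in `So`. -/
def projOn (So : Set S) (s : List S) : List S :=
  s.filter fun e => decide (e ∈ So)

/-- `K` is controllable with respect to `L` and the uncontrollable events `Suc`. -/
def Controllable (L : Set (List S)) (Suc : Set S) (K : Set (List S)) : Prop :=
  ∀ s e, s ∈ K → e ∈ Suc → s ++ [e] ∈ L → s ++ [e] ∈ K

/-- `K` is normal with respect to `So` and `L`: `K = P⁻¹(P(K)) ∩ L`. -/
def Normal (L : Set (List S)) (So : Set S) (K : Set (List S)) : Prop :=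
  K = {s | (∃ t ∈ K, projOn So s = projOn So t) ∧ s ∈ L}

/-- The union of all prefix-closed, controllable and normal sublanguages of `K`. -/
def supCN (L : Set (List S)) (Suc So : Set S) (K : Set (List S)) : Set (List S) :=
  ⋃₀ {K' | K' ⊆ K ∧ PrefixClosed K' ∧ Controllable L Suc K' ∧ Normal L So K'}

/-! Each of the three properties is preserved by arbitrary unions; for normality this is because
it amounts to `K ⊆ L` together with the closure condition `t ∈ K, P s = P t, s ∈ L ⟹ s ∈ K`.
Hence `K↑` belongs to the family it is the union of, and is its greatest element. -/

variable {L : Set (List S)} {Suc So : Set S} {𝒦 : Set (Set (List S))}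

theorem PrefixClosed.sUnion (h : ∀ K ∈ 𝒦, PrefixClosed K) : PrefixClosed (⋃₀ 𝒦) := by
  rintro u v ⟨K, hK, huv⟩
  exact ⟨K, hK, h K hK u v huv⟩

theorem Controllable.sUnion (h : ∀ K ∈ 𝒦, Controllable L Suc K) :
    Controllable L Suc (⋃₀ 𝒦) := by
  rintro s e ⟨K, hK, hs⟩ he hse
  exact ⟨K, hK, h K hK s e hs he hse⟩

theorem normal_iff {K : Set (List S)} :
    Normal L So K ↔
      K ⊆ L ∧ ∀ s t, t ∈ K → projOn So s = projOn So t → s ∈ L → s ∈ K := by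
  constructor
  · intro hK
    refine ⟨fun s hs => ?_, fun s t ht hst hs => ?_⟩
    · rw [hK] at hs
      exact hs.2
    · rw [hK]
      exact ⟨⟨t, ht, hst⟩, hs⟩
  · rintro ⟨hKL, hclosed⟩
    ext s
    constructor
    · exact fun hs => ⟨⟨s, hs, rfl⟩, hKL hs⟩
    · rintro ⟨⟨t, ht, hst⟩, hs⟩
      exact hclosed s t ht hst hs

theorem Normal.sUnion (h : ∀ K ∈ 𝒦, Normal L So K) : Normal L So (⋃₀ 𝒦) := by
  refine normal_iff.2 ⟨Set.sUnion_subset fun K hK => (normal_iff.1 (h K hK)).1, ?_⟩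
  rintro s t ⟨K, hK, ht⟩ hst hs
  exact ⟨K, hK, (normal_iff.1 (h K hK)).2 s t ht hst hs⟩

variable (L Suc So) in
def controllableNormalSublangs (K : Set (List S)) : Set (Set (List S)) :=
  {K' | K' ⊆ K ∧ PrefixClosed K' ∧ Controllable L Suc K' ∧ Normal L So K'}

theorem isGreatest_supCN (K : Set (List S)) :
    IsGreatest (controllableNormalSublangs L Suc So K) (supCN L Suc So K) := by
  refine ⟨⟨?_, ?_, ?_, ?_⟩, fun _ => Set.subset_sUnion_of_mem⟩
  · exact Set.sUnion_subset fun _ hK' => hK'.1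
  · exact PrefixClosed.sUnion fun _ hK' => hK'.2.1
  · exact Controllable.sUnion fun _ hK' => hK'.2.2.1
  · exact Normal.sUnion fun _ hK' => hK'.2.2.2

theorem supremal_controllable_normal_general
    (Suc So : Set S)
    (L K : Set (List S)) :
    PrefixClosed (supCN L Suc So K) ∧
    Controllable L Suc (supCN L Suc So K) ∧
    Normal L So (supCN L Suc So K) ∧
    supCN L Suc So K ⊆ K ∧
    (∀ K', K' ⊆ K → PrefixClosed K' → Controllable L Suc K' → Normal L So K' →
      K' ⊆ supCN L Suc So K) ∧
    (∀ M, M ⊆ K → PrefixClosed M → Controllable L Suc M → Normal L So M →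
      (∀ K', K' ⊆ K → PrefixClosed K' → Controllable L Suc K' → Normal L So K' → K' ⊆ M) →
      M = supCN L Suc So K) := by
  have hsup := isGreatest_supCN (L := L) (Suc := Suc) (So := So) K
  obtain ⟨hsub, hpc, hctrl, hnorm⟩ := hsup.1
  refine ⟨hpc, hctrl, hnorm, hsub, fun K' h₁ h₂ h₃ h₄ => hsup.2 ⟨h₁, h₂, h₃, h₄⟩, ?_⟩
  intro M h₁ h₂ h₃ h₄ hM
  have hMgreatest : IsGreatest (controllableNormalSublangs L Suc So K) M :=
    ⟨⟨h₁, h₂, h₃, h₄⟩, fun K' hK' => hM K' hK'.1 hK'.2.1 hK'.2.2.1 hK'.2.2.2⟩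
  exact hMgreatest.unique hsup

/-- the union `K↑` of all prefix-closed sublanguages of `K` that are
controllable w.r.t. `L,Σuc` and normal w.r.t. `Σo,L` is itself prefix-closed,
controllable and normal; it is contained in `K`, it contains every such sublanguage,
and it is the unique supremal such sublanguage. -/
theorem supremal_controllable_normal [Finite S]
    (Sc Suc So Suo : Set S)
    (hpartc : Sc ∪ Suc = Set.univ) (hdisjc : Disjoint Sc Suc)
    (hparto : So ∪ Suo = Set.univ) (hdisjo : Disjoint So Suo)
    (L K : Set (List S)) (hL : PrefixClosed L) (hK : PrefixClosed K) (hKL : K ⊆ L) :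
    PrefixClosed (supCN L Suc So K) ∧
    Controllable L Suc (supCN L Suc So K) ∧
    Normal L So (supCN L Suc So K) ∧
    supCN L Suc So K ⊆ K ∧
    (∀ K', K' ⊆ K → PrefixClosed K' → Controllable L Suc K' → Normal L So K' →
      K' ⊆ supCN L Suc So K) ∧
    (∀ M, M ⊆ K → PrefixClosed M → Controllable L Suc M → Normal L So M →
      (∀ K', K' ⊆ K → PrefixClosed K' → Controllable L Suc K' → Normal L So K' → K' ⊆ M) →
      M = supCN L Suc So K) :=
  supremal_controllable_normal_general Suc So L K

end RobustDES
end
end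

section
/- Let L ⊆ Σ* be a prefix-closed language and K ⊆ L a prefix-closed language, and suppose every controllable event is observable, i.e., Σ_c ⊆ Σ_o. If K is controllable with respect to L and Σ_uc and observable with respect to Σ_o and Σ_c, then K is normal with respect to Σ_o and L. Consequently, under Σ_c ⊆ Σ_o, a prefix-closed K ⊆ L is controllable and observable if and only if it is controllable and normal. -/
attribute [local instance] Classical.propDecidable

noncomputable section

namespace RobustDES

variable {S : Type}

/-- `K` is observable with respect to `So`, `Sc` (and `L`). -/
def Observable (L : Set (List S)) (So Sc : Set S) (K : Set (List S)) : Prop :=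
  ∀ s e, s ∈ K → e ∈ Sc → s ++ [e] ∈ K →
    ∀ s', projOn So s' = projOn So s → s' ++ [e] ∈ L → s' ++ [e] ∈ K

theorem PrefixClosed.mem_of_prefix {K : Set (List S)} (hK : PrefixClosed K) {u v : List S}
    (h : u <+: v) (hv : v ∈ K) : u ∈ K := by
  obtain ⟨w, rfl⟩ := h
  exact hK u w hv

theorem projOn_append (So : Set S) (u v : List S) :
    projOn So (u ++ v) = projOn So u ++ projOn So v :=
  List.filter_append ..

theorem projOn_append_singleton_of_mem {So : Set S} {e : S} (he : e ∈ So) (u : List S) :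
    projOn So (u ++ [e]) = projOn So u ++ [e] := by
  simp [projOn, he]

theorem exists_prefix_of_projOn_eq_append {So : Set S} {t w w' : List S}
    (h : projOn So t = w ++ w') : ∃ t₁, t₁ <+: t ∧ projOn So t₁ = w := by
  obtain ⟨t₁, t₂, rfl, ht₁, -⟩ := List.filter_eq_append_iff.1 h
  exact ⟨t₁, List.prefix_append t₁ t₂, ht₁⟩

theorem exists_prefix_of_projOn_eq_append_singleton {So : Set S} {t w : List S} {e : S}
    (h : projOn So t = w ++ [e]) : ∃ t₁, t₁ ++ [e] <+: t ∧ projOn So t₁ = w := by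
  obtain ⟨l₁, l₂, rfl, hl₁, hl₂⟩ := List.filter_eq_append_iff.1 h
  obtain ⟨m₁, m₂, rfl, hm₁, -, -⟩ := List.filter_eq_cons_iff.1 hl₂
  refine ⟨l₁ ++ m₁, ⟨m₂, by simp⟩, ?_⟩
  rw [projOn_append, projOn, projOn, List.filter_eq_nil_iff.2 hm₁, List.append_nil, hl₁]

theorem normal_iff_of_subset {L K : Set (List S)} {So : Set S} (hKL : K ⊆ L) :
    Normal L So K ↔ ∀ s ∈ L, ∀ t ∈ K, projOn So s = projOn So t → s ∈ K := by
  constructor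
  · intro hN s hs t ht hst
    rw [hN]
    exact ⟨⟨t, ht, hst⟩, hs⟩
  · intro h
    ext s
    exact ⟨fun hs => ⟨⟨s, hs, rfl⟩, hKL hs⟩, fun ⟨⟨t, ht, hst⟩, hs⟩ => h s hs t ht hst⟩

theorem Normal.observable {L K : Set (List S)} {So : Set S} (hN : Normal L So K) (Sc : Set S) :
    Observable L So Sc K := by
  intro s e _ _ hse s' hs's hs'e
  rw [hN]
  exact ⟨⟨s ++ [e], hse, by rw [projOn_append, projOn_append, hs's]⟩, hs'e⟩

/-- A string of `L` with the projection of a string `t ∈ K` is in `K` by induction on its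
length: an uncontrollable last event is admitted by controllability; a controllable one is
observed, so it ends a prefix of `t`, and observability transfers it. -/
theorem Observable.normal {L K : Set (List S)} {Sc Suc So : Set S}
    (hcover : Sc ∪ Suc = Set.univ) (hco : Sc ⊆ So)
    (hL : PrefixClosed L) (hK : PrefixClosed K) (hKL : K ⊆ L)
    (hc : Controllable L Suc K) (ho : Observable L So Sc K) : Normal L So K := by
  refine (normal_iff_of_subset hKL).2 fun s => ?_
  induction s using List.reverseRecOn with
  | nil =>
    intro _ t ht _
    exact hK [] t ht
  | append_singleton u e ih =>
    intro hs t ht hst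
    have he : e ∈ Sc ∪ Suc := hcover ▸ Set.mem_univ e
    rcases he with heC | heU
    · obtain ⟨t₁, ht₁e, ht₁⟩ := exists_prefix_of_projOn_eq_append_singleton
        (hst.symm.trans (projOn_append_singleton_of_mem (hco heC) u))
      have ht₁eK : t₁ ++ [e] ∈ K := hK.mem_of_prefix ht₁e ht
      exact ho t₁ e (hK t₁ [e] ht₁eK) heC ht₁eK u ht₁.symm hs
    · obtain ⟨t₁, ht₁t, ht₁⟩ :=
        exists_prefix_of_projOn_eq_append (hst.symm.trans (projOn_append So u [e]))
      have hu : u ∈ K := ih (hL u [e] hs) t₁ (hK.mem_of_prefix ht₁t ht) ht₁.symm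
      exact hc u e hu heU hs

theorem controllable_observable_iff_controllable_normal_general
    (Sc Suc So : Set S)
    (hpartc : Sc ∪ Suc = Set.univ)
    (hco : Sc ⊆ So)
    (L K : Set (List S)) (hL : PrefixClosed L) (hK : PrefixClosed K) (hKL : K ⊆ L) :
    (Controllable L Suc K → Observable L So Sc K → Normal L So K) ∧
    (Controllable L Suc K ∧ Observable L So Sc K ↔
      Controllable L Suc K ∧ Normal L So K) :=
  ⟨fun hc ho => ho.normal hpartc hco hL hK hKL hc,
    ⟨fun ⟨hc, ho⟩ => ⟨hc, ho.normal hpartc hco hL hK hKL hc⟩,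
      fun ⟨hc, hN⟩ => ⟨hc, hN.observable Sc⟩⟩⟩

/-- if every controllable event is observable (`Sc ⊆ So`), then a
controllable and observable prefix-closed sublanguage is normal; consequently,
controllable-and-observable is equivalent to controllable-and-normal. -/
theorem controllable_observable_iff_controllable_normal [Finite S]
    (Sc Suc So Suo : Set S)
    (hpartc : Sc ∪ Suc = Set.univ) (hdisjc : Disjoint Sc Suc)
    (hparto : So ∪ Suo = Set.univ) (hdisjo : Disjoint So Suo)
    (hco : Sc ⊆ So)
    (L K : Set (List S)) (hL : PrefixClosed L) (hK : PrefixClosed K) (hKL : K ⊆ L) :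
    (Controllable L Suc K → Observable L So Sc K → Normal L So K) ∧
    (Controllable L Suc K ∧ Observable L So Sc K ↔
      Controllable L Suc K ∧ Normal L So K) :=
  controllable_observable_iff_controllable_normal_general Sc Suc So hpartc hco L K hL hK hKL

end RobustDES
end
end

section
/- The attack automaton cannot disable events of the supervised plant: if s ∈ L(G_a||R_a||A), e ∈ Σ_o, and se ∈ L(G_a||R_a), then either se ∈ L(G_a||R_a||A), or e ∈ Σ_a and s e_d ∈ L(G_a||R_a||A). -/
attribute [local instance] Classical.propDecidable

noncomputable section

namespace RobustDES

/-- Events of the attacked system `Σ_m = Σ ∪ Σ_a^i ∪ Σ_a^d`: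
`plain a` is a legitimate event `a ∈ Σ`, `ins a` is the inserted copy `a_i`
and `del a` is the deleted copy `a_d`. -/
inductive Ev (S : Type) : Type
  | plain : S → Ev S
  | ins : S → Ev S
  | del : S → Ev S

/-- Extension of a partial transition function to strings. -/
def run {X E : Type} (δ : X → E → Option X) : X → List E → Option X
  | x, [] => some x
  | x, e :: s => (δ x e).bind fun y => run δ y s

/-- The language generated by a partial automaton `(X, δ, x0)`. -/
def Lang {X E : Type} (δ : X → E → Option X) (x0 : X) : Set (List E) :=
  { s | (run δ x0 s).isSome }

variable {S XG XR XA : Type}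

/-- The projection `P^G : Σ_m* → Σ*` (`a, a_d ↦ a`, `a_i ↦ ε`). -/
def PGproj : List (Ev S) → List S := fun s =>
  s.flatMap fun e =>
    match e with
    | .plain a => [a]
    | .del a => [a]
    | .ins _ => []

/-- The projection `P^S : Σ_m* → Σ*` (`a, a_i ↦ a`, `a_d ↦ ε`). -/
def PSproj : List (Ev S) → List S := fun s =>
  s.flatMap fun e =>
    match e with
    | .plain a => [a]
    | .ins a => [a]
    | .del _ => []

/-- Membership of a tagged event in `Σ_{o,e} = Σ_o ∪ Σ_a^i ∪ Σ_a^d`. -/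
def inOe (So Sa : Set S) : Ev S → Prop
  | .plain a => a ∈ So
  | .ins a => a ∈ Sa
  | .del a => a ∈ Sa

/-- Natural projection `P_{Σ_mΣ_{o,e}}` erasing the unobservable events `Σ_uo`. -/
def projOe (So : Set S) : List (Ev S) → List (Ev S) := fun s =>
  s.flatMap fun e =>
    match e with
    | .plain a => if a ∈ So then [Ev.plain a] else []
    | e => [e]

/-- Transition function of the attacked plant `G_a` (over `Σ_m`):
`δ_{G_a}(x,e) = δ_G(x, P^G(e))`. -/
def δGa (Sa : Set S) (δG : XG → S → Option XG) : XG → Ev S → Option XG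
  | x, .plain a => δG x a
  | x, .del a => if a ∈ Sa then δG x a else none
  | x, .ins a => if a ∈ Sa then some x else none

/-- Active (legitimate) event set of a supervisor state. -/
def ΓR (δR : XR → S → Option XR) (y : XR) : Set S := {e | (δR y e).isSome}

/-- Transition function of the attacked supervisor `R_a` (over `Σ_m`). -/
def δRa (Sa : Set S) (δR : XR → S → Option XR) : XR → Ev S → Option XR
  | y, .plain a => δR y a
  | y, .ins a =>
      if a ∈ Sa then (if (δR y a).isSome then δR y a else some y) else none
  | y, .del a =>
      if a ∈ Sa then (if (δR y a).isSome then some y else none) else none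

/-- `R` is a supervisor realization: every uncontrollable event is enabled
everywhere and enabled unobservable events self-loop. -/
def IsSupRealization (So Suc : Set S) (δR : XR → S → Option XR) : Prop :=
  (∀ x e, e ∈ Suc → (δR x e).isSome) ∧
  (∀ x e, e ∉ So → (δR x e).isSome → δR x e = some x)

/-- `A` is an attack automaton over `Σ_{o,e}`: it is complete on `Σ_o \ Σ_a`,
for every `e ∈ Σ_a` either `e` or `e_d` is defined, and it is undefined outside
`Σ_{o,e}`. -/
def IsAttack (So Sa : Set S) (δA : XA → Ev S → Option XA) : Prop :=
  (∀ q a, a ∈ So → a ∉ Sa → (δA q (.plain a)).isSome) ∧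
  (∀ q a, a ∈ Sa → ((δA q (.plain a)).isSome ∨ (δA q (.del a)).isSome)) ∧
  (∀ q e, ¬ inOe So Sa e → δA q e = none)

/-- Transition function of the composition `G_a || R_a || A` over `Σ_m`:
all three components move on events of `Σ_{o,e}`, only `G_a` and `R_a` move on
unobservable events. -/
def δGRA (So Sa : Set S) (δG : XG → S → Option XG) (δR : XR → S → Option XR)
    (δA : XA → Ev S → Option XA) :
    XG × XR × XA → Ev S → Option (XG × XR × XA) := fun p e =>
  match e with
  | .plain a =>
    if a ∈ So then
      match δGa Sa δG p.1 (.plain a), δRa Sa δR p.2.1 (.plain a), δA p.2.2 (.plain a) with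
      | some x, some y, some z => some (x, y, z)
      | _, _, _ => none
    else
      match δGa Sa δG p.1 (.plain a), δRa Sa δR p.2.1 (.plain a) with
      | some x, some y => some (x, y, p.2.2)
      | _, _ => none
  | e =>
      match δGa Sa δG p.1 e, δRa Sa δR p.2.1 e, δA p.2.2 e with
      | some x, some y, some z => some (x, y, z)
      | _, _, _ => none

/-- Transition function of the composition `G_a || R_a` over `Σ_m`. -/
def δGaRa (Sa : Set S) (δG : XG → S → Option XG) (δR : XR → S → Option XR) :
    XG × XR → Ev S → Option (XG × XR) := fun p e =>
  match δGa Sa δG p.1 e, δRa Sa δR p.2 e with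
  | some x, some y => some (x, y)
  | _, _ => none

/-- `R` is robust w.r.t. `G`, `X_crit` and `A`:
`δ_G(x_{0,G}, s) ∉ X_crit` for every `s ∈ L(S_A/G) = P^G(L(G_a||R_a||A))`. -/
def Robust (So Sa : Set S) (Xcrit : Set XG)
    (δG : XG → S → Option XG) (x0G : XG)
    (δR : XR → S → Option XR) (x0R : XR)
    (δA : XA → Ev S → Option XA) (x0A : XA) : Prop :=
  ∀ t ∈ Lang (δGRA So Sa δG δR δA) (x0G, x0R, x0A),
    ∀ x, run δG x0G (PGproj t) = some x → x ∉ Xcrit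

/-- Total extension `Δ_R` of `δ_R` over observable strings. -/
def ΔRrun (δR : XR → S → Option XR) : XR → List S → XR
  | y, [] => y
  | y, e :: s => ΔRrun δR ((δR y e).getD y) s

/-- Control decision `C_R(s) = Γ_R(Δ_R(x_{0,R}, s))`. -/
def CR (δR : XR → S → Option XR) (x0R : XR) (s : List S) : Set S :=
  {e | (δR (ΔRrun δR x0R s) e).isSome}

/-- The state estimate under attack
`RE(s) = {x : x = δ_{G_a}(x_{0,G}, t), t ∈ P⁻¹_{Σ_mΣ_{o,e}}(s) ∩ L(G_a||R_a||A)}`. -/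
def RE (So Sa : Set S) (δG : XG → S → Option XG) (x0G : XG)
    (δR : XR → S → Option XR) (x0R : XR)
    (δA : XA → Ev S → Option XA) (x0A : XA) (s : List (Ev S)) : Set XG :=
  {x | ∃ t, projOe So t = s ∧ t ∈ Lang (δGRA So Sa δG δR δA) (x0G, x0R, x0A) ∧
        run (δGa Sa δG) x0G t = some x}

/-! ### The arena -/

/-- Unobservable reach `UR_γ(Q)`. -/
def URch (So : Set S) (δG : XG → S → Option XG) (γ : Set S) (Q : Set XG) : Set XG :=
  {x | ∃ t : List S, (∀ a ∈ t, a ∉ So ∧ a ∈ γ) ∧ ∃ q ∈ Q, run δG q t = some x}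

/-- Observable reach `NX_e(Q)`. -/
def NXr (δG : XG → S → Option XG) (a : S) (Q : Set XG) : Set XG :=
  {x | ∃ q ∈ Q, δG q a = some x}

/-- Active event set `Γ_G(Q)` of a set of plant states. -/
def ΓGset (δG : XG → S → Option XG) (Q : Set XG) : Set S :=
  {a | ∃ x ∈ Q, (δG x a).isSome}

/-- Player-1 states of the arena. -/
abbrev AQ1 (XG XA : Type) := Set XG × XA

/-- Player-2 states of the arena. -/
abbrev AQ2 (S XG XA : Type) := Set XG × XA × Set S × Option S

/-- Player-1 transition `h₁((S₁,S₂),γ) = (UR_γ(S₁), S₂, γ, ε)`. -/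
def h1 (So : Set S) (δG : XG → S → Option XG) (p : AQ1 XG XA) (γ : Set S) :
    AQ2 S XG XA :=
  (URch So δG γ p.1, p.2, γ, none)

/-- Player-2 transition `h₂`. -/
def h2 (So Sa : Set S) (δG : XG → S → Option XG) (δA : XA → Ev S → Option XA)
    (q : AQ2 S XG XA) : Ev S → Option (AQ1 XG XA ⊕ AQ2 S XG XA)
  | .plain a =>
    if a ∈ So then
      if q.2.2.2 = some a then some (Sum.inl (q.1, q.2.1))
      else if q.2.2.2 = none ∧ a ∈ ΓGset δG q.1 ∧ a ∈ q.2.2.1 then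
        (δA q.2.1 (.plain a)).map fun z => Sum.inl (NXr δG a q.1, z)
      else none
    else none
  | .ins a =>
    if a ∈ Sa ∧ q.2.2.2 = none then
      (δA q.2.1 (.ins a)).map fun z => Sum.inr (q.1, z, q.2.2.1, some a)
    else none
  | .del a =>
    if a ∈ Sa ∧ q.2.2.2 = none ∧ a ∈ ΓGset δG q.1 ∧ a ∈ q.2.2.1 then
      (δA q.2.1 (.del a)).map fun z =>
        Sum.inr (URch So δG q.2.2.1 (NXr δG a q.1), z, q.2.2.1, none)
    else none

/-- One-step map `H₂ : Q₂ × Σ_{o,e} × Γ ⇀ Q₂` of Definition 6. -/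
def H2 (So Sa : Set S) (δG : XG → S → Option XG) (δA : XA → Ev S → Option XA)
    (q : AQ2 S XG XA) : Ev S → Set S → Option (AQ2 S XG XA)
  | .plain a, γ =>
      (h2 So Sa δG δA q (.plain a)).bind fun r =>
        match r with
        | .inl p => some (h1 So δG p γ)
        | .inr _ => none
  | .del a, _ =>
      (h2 So Sa δG δA q (.del a)).bind fun r =>
        match r with
        | .inr q' => some q'
        | .inl _ => none
  | .ins a, γ =>
      (h2 So Sa δG δA q (.ins a)).bind fun r =>
        match r with
        | .inr q' =>
            (h2 So Sa δG δA q' (.plain a)).bind fun r2 =>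
              match r2 with
              | .inl p => some (h1 So δG p γ)
              | .inr _ => none
        | .inl _ => none

/-- Extension of `H₂` to strings with a sequence of control decisions. -/
def H2run (So Sa : Set S) (δG : XG → S → Option XG) (δA : XA → Ev S → Option XA) :
    AQ2 S XG XA → List (Ev S) → List (Set S) → Option (AQ2 S XG XA)
  | q, [], [] => some q
  | q, e :: s, γ :: γs =>
      (H2 So Sa δG δA q e γ).bind fun q' => H2run So Sa δG δA q' s γs
  | _, _ :: _, [] => none
  | _, [], _ :: _ => none

/-- The sequence of control decisions `γ_i = C_R(P^S(s^i))`, `i = 1, …, |s|`. -/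
def ctrlSeq (δR : XR → S → Option XR) (x0R : XR) (s : List (Ev S)) : List (Set S) :=
  (List.range s.length).map fun i => CR δR x0R (PSproj (s.take (i + 1)))

/-- Initial arena state `q₀ = ({x_{0,G}}, x_{0,A})`. -/
def arenaInit (x0G : XG) (x0A : XA) : AQ1 XG XA := ({x0G}, x0A)

/-- The arena `𝒜` regarded as a partial automaton over `E = Γ ∪ Σ_{o,e}`. -/
def δAr (So Suc Sa : Set S) (δG : XG → S → Option XG) (δA : XA → Ev S → Option XA) :
    (AQ1 XG XA ⊕ AQ2 S XG XA) → (Set S ⊕ Ev S) → Option (AQ1 XG XA ⊕ AQ2 S XG XA)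
  | .inl p, .inl γ => if Suc ⊆ γ then some (.inr (h1 So δG p γ)) else none
  | .inr q, .inr e => h2 So Sa δG δA q e
  | _, _ => none

/-- The projection `I₁` onto the plant state-estimate component. -/
def I1 : (AQ1 XG XA ⊕ AQ2 S XG XA) → Set XG := Sum.elim Prod.fst Prod.fst

/-- The projection `I₂` onto the attacker-state component. -/
def I2 : (AQ1 XG XA ⊕ AQ2 S XG XA) → XA := Sum.elim (fun p => p.2) (fun q => q.2.1)

/-- The language `L(𝒜)` of the arena. -/
def LA (So Suc Sa : Set S) (δG : XG → S → Option XG) (δA : XA → Ev S → Option XA)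
    (x0G : XG) (x0A : XA) : Set (List (Set S ⊕ Ev S)) :=
  Lang (δAr So Suc Sa δG δA) (Sum.inl (arenaInit x0G x0A))

/-- The language `L(𝒜^{trim})`: strings of `L(𝒜)` whose runs visit no state `q`
with `I₁(q) ∩ X_crit ≠ ∅`. -/
def LAtrim (So Suc Sa : Set S) (δG : XG → S → Option XG)
    (δA : XA → Ev S → Option XA) (x0G : XG) (x0A : XA) (Xcrit : Set XG) :
    Set (List (Set S ⊕ Ev S)) :=
  {s | s ∈ LA So Suc Sa δG δA x0G x0A ∧
    ∀ u, u <+: s → ∀ st, run (δAr So Suc Sa δG δA) (Sum.inl (arenaInit x0G x0A)) u =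
      some st → I1 st ∩ Xcrit = ∅}

/-- The controllable meta-events `E_c = Γ \ {Σ_uc}`. -/
def Ec (Suc : Set S) : Set (Set S ⊕ Ev S) :=
  {a | ∃ γ : Set S, a = Sum.inl γ ∧ Suc ⊆ γ ∧ γ ≠ Suc}

/-- `K` is controllable w.r.t. `L` and the uncontrollable events `Euc`. -/
def ControllableLang {E : Type} (L : Set (List E)) (Euc : Set E)
    (K : Set (List E)) : Prop :=
  ∀ s ∈ K, ∀ a ∈ Euc, s ++ [a] ∈ L → s ++ [a] ∈ K

/-- `K` is normal w.r.t. the projection `P` and `L`: `K = P⁻¹(P(K)) ∩ L`. -/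
def NormalLang {E : Type} (P : List E → List E) (L K : Set (List E)) : Prop :=
  K = {s | s ∈ L ∧ ∃ t ∈ K, P t = P s}

/-- Natural projection of meta-strings onto the observable meta-events
`E_o = E \ Σ_a^e`. -/
def projEo : List (Set S ⊕ Ev S) → List (Set S ⊕ Ev S) := fun s =>
  s.flatMap fun a =>
    match a with
    | Sum.inr (.ins _) => []
    | Sum.inr (.del _) => []
    | a => [a]

/-- `L(𝒜^{sup})`: the union of all sublanguages of `L(𝒜^{trim})` that are
controllable w.r.t. `L(𝒜)` and `E \ E_c` and normal w.r.t. `E_o` and `L(𝒜)`. -/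
def Lsup (So Suc Sa : Set S) (δG : XG → S → Option XG)
    (δA : XA → Ev S → Option XA) (x0G : XG) (x0A : XA) (Xcrit : Set XG) :
    Set (List (Set S ⊕ Ev S)) :=
  ⋃₀ {K | K ⊆ LAtrim So Suc Sa δG δA x0G x0A Xcrit ∧
      ControllableLang (LA So Suc Sa δG δA x0G x0A) (Ec Suc)ᶜ K ∧
      NormalLang projEo (LA So Suc Sa δG δA x0G x0A) K}

/-- The run word `W(s; γ₀, …, γ_{|s|})` in the arena. -/
def Wword (γ0 : Set S) (s : List (Ev S)) (γs : List (Set S)) :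
    List (Set S ⊕ Ev S) :=
  Sum.inl γ0 :: (s.zip γs).flatMap fun p =>
    match p.1 with
    | .plain a => [Sum.inr (Ev.plain a), Sum.inl p.2]
    | .del a => [Sum.inr (Ev.del a)]
    | .ins a => [Sum.inr (Ev.ins a), Sum.inr (Ev.plain a), Sum.inl p.2]

/-- The projection `η : E* → Σ_o*` erasing all meta-events not in `Σ_o`. -/
def ηproj (So : Set S) : List (Set S ⊕ Ev S) → List S := fun s =>
  s.flatMap fun a =>
    match a with
    | Sum.inr (.plain e) => if e ∈ So then [e] else []
    | _ => []


/-- The all-out attack strategy: a single state with every event of `Σ_{o,e}`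
defined (as a self-loop). -/
def allOutδ (So Sa : Set S) : Unit → Ev S → Option Unit := fun _ e =>
  if inOe So Sa e then some () else none

/-- The supervisor extracted from a generator of `L(𝒜^{sup})` by a choice
function `c` of control decisions (Algorithm 1): on an observable enabled event
follow the arena (choose `c y`, then the event), on an unobservable enabled
event self-loop, and disable events outside `c y`. -/
def extractR {Y : Type} (So : Set S) (δg : Y → (Set S ⊕ Ev S) → Option Y)
    (c : Y → Set S) : Y → S → Option Y := fun y a =>
  if a ∈ c y then
    if a ∈ So then
      some (((δg y (Sum.inl (c y))).bind fun y' =>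
        δg y' (Sum.inr (Ev.plain a))).getD y)
    else some y
  else none

/-- The language `L_R` built inductively from a supervisor `R` inside the arena:
`ε ∈ L_R`; from a player-2 state every event of `Σ_{o,e}` feasible in `𝒜` may be
appended; from a player-1 state the control decisions `Σ_uc` and `C_R(η(s))`
may be appended. -/
inductive LRmem {S XG XA XR : Type} (So Suc Sa : Set S)
    (δG : XG → S → Option XG) (x0G : XG)
    (δA : XA → Ev S → Option XA) (x0A : XA)
    (δR : XR → S → Option XR) (x0R : XR) : List (Set S ⊕ Ev S) → Prop
  | nil : LRmem So Suc Sa δG x0G δA x0A δR x0R []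
  | p2 (s : List (Set S ⊕ Ev S)) (q : AQ2 S XG XA) (e : Ev S) :
      LRmem So Suc Sa δG x0G δA x0A δR x0R s →
      run (δAr So Suc Sa δG δA) (Sum.inl (arenaInit x0G x0A)) s = some (Sum.inr q) →
      inOe So Sa e →
      (run (δAr So Suc Sa δG δA) (Sum.inl (arenaInit x0G x0A))
        (s ++ [Sum.inr e])).isSome →
      LRmem So Suc Sa δG x0G δA x0A δR x0R (s ++ [Sum.inr e])
  | p1uc (s : List (Set S ⊕ Ev S)) (p : AQ1 XG XA) :
      LRmem So Suc Sa δG x0G δA x0A δR x0R s →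
      run (δAr So Suc Sa δG δA) (Sum.inl (arenaInit x0G x0A)) s = some (Sum.inl p) →
      LRmem So Suc Sa δG x0G δA x0A δR x0R (s ++ [Sum.inl Suc])
  | p1R (s : List (Set S ⊕ Ev S)) (p : AQ1 XG XA) :
      LRmem So Suc Sa δG x0G δA x0A δR x0R s →
      run (δAr So Suc Sa δG δA) (Sum.inl (arenaInit x0G x0A)) s = some (Sum.inl p) →
      LRmem So Suc Sa δG x0G δA x0A δR x0R (s ++ [Sum.inl (CR δR x0R (ηproj So s))])

/-! If `G_a‖R_a` can execute `e ∈ Σ_o` after `s`, then both `G` and `R` enable `e` at the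
states reached, which is also exactly what makes `e_d` feasible for `G_a‖R_a` when
`e ∈ Σ_a`. The attack automaton is required to enable `e`, or `e_d` when `e` is
compromised, so the closed loop can always follow with one of them. -/

theorem run_append {X E : Type} (δ : X → E → Option X) (x : X) (s t : List E) :
    run δ x (s ++ t) = (run δ x s).bind fun y => run δ y t := by
  induction s generalizing x with
  | nil => rfl
  | cons e s ih => simp only [List.cons_append, run, ih, Option.bind_assoc]

theorem append_singleton_mem_Lang_iff {X E : Type} (δ : X → E → Option X) (x0 : X)
    (s : List E) (e : E) :
    s ++ [e] ∈ Lang δ x0 ↔ ∃ x, run δ x0 s = some x ∧ (δ x e).isSome := by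
  simp only [Lang, Set.mem_ofPred_eq, run_append]
  cases run δ x0 s <;> simp [run]

section Composition

variable {So Sa : Set S} {δG : XG → S → Option XG} {δR : XR → S → Option XR}
  {δA : XA → Ev S → Option XA}

theorem δGaRa_of_δGRA {p q : XG × XR × XA} {e : Ev S}
    (h : δGRA So Sa δG δR δA p e = some q) :
    δGaRa Sa δG δR (p.1, p.2.1) e = some (q.1, q.2.1) := by
  cases e <;> simp only [δGRA] at h <;> (try split_ifs at h) <;> split at h <;> cases h <;>
    simp only [δGaRa, *]

theorem run_δGaRa_of_run_δGRA {s : List (Ev S)} {p q : XG × XR × XA}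
    (h : run (δGRA So Sa δG δR δA) p s = some q) :
    run (δGaRa Sa δG δR) (p.1, p.2.1) s = some (q.1, q.2.1) := by
  induction s generalizing p with
  | nil => cases h; rfl
  | cons e s ih =>
    obtain ⟨p', hp', hrun⟩ := Option.bind_eq_some_iff.mp h
    simp only [run, δGaRa_of_δGRA hp', Option.bind_some, ih hrun]

theorem δGRA_plain_isSome_iff {a : S} (ha : a ∈ So) (p : XG × XR × XA) :
    (δGRA So Sa δG δR δA p (.plain a)).isSome ↔
      (δGaRa Sa δG δR (p.1, p.2.1) (.plain a)).isSome ∧ (δA p.2.2 (.plain a)).isSome := by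
  simp only [δGRA, δGaRa, δGa, δRa, ha, if_true]
  cases δG p.1 a <;> cases δR p.2.1 a <;> cases δA p.2.2 (.plain a) <;> simp

theorem δGRA_del_isSome_iff {a : S} (ha : a ∈ Sa) (p : XG × XR × XA) :
    (δGRA So Sa δG δR δA p (.del a)).isSome ↔
      (δGaRa Sa δG δR (p.1, p.2.1) (.plain a)).isSome ∧ (δA p.2.2 (.del a)).isSome := by
  simp only [δGRA, δGaRa, δGa, δRa, ha, if_true]
  cases δG p.1 a <;> cases δR p.2.1 a <;> cases δA p.2.2 (.del a) <;> simp

theorem IsAttack.δGRA_plain_or_del (hA : IsAttack So Sa δA) {a : S} (ha : a ∈ So)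
    {p : XG × XR × XA} (h : (δGaRa Sa δG δR (p.1, p.2.1) (.plain a)).isSome) :
    (δGRA So Sa δG δR δA p (.plain a)).isSome ∨
      (a ∈ Sa ∧ (δGRA So Sa δG δR δA p (.del a)).isSome) := by
  by_cases haSa : a ∈ Sa
  · rcases hA.2.1 p.2.2 a haSa with hplain | hdel
    · exact .inl ((δGRA_plain_isSome_iff ha p).mpr ⟨h, hplain⟩)
    · exact .inr ⟨haSa, (δGRA_del_isSome_iff haSa p).mpr ⟨h, hdel⟩⟩
  · exact .inl ((δGRA_plain_isSome_iff ha p).mpr ⟨h, hA.1 p.2.2 a ha haSa⟩)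

end Composition

theorem attacker_cannot_disable_general
    (So Sa : Set S)
    (δG : XG → S → Option XG) (x0G : XG)
    (δR : XR → S → Option XR) (x0R : XR)
    (δA : XA → Ev S → Option XA) (x0A : XA) (hA : IsAttack So Sa δA)
    (s : List (Ev S)) (a : S) (ha : a ∈ So)
    (hs : s ∈ Lang (δGRA So Sa δG δR δA) (x0G, x0R, x0A))
    (hse : s ++ [Ev.plain a] ∈ Lang (δGaRa Sa δG δR) (x0G, x0R)) :
    s ++ [Ev.plain a] ∈ Lang (δGRA So Sa δG δR δA) (x0G, x0R, x0A) ∨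
      (a ∈ Sa ∧ s ++ [Ev.del a] ∈ Lang (δGRA So Sa δG δR δA) (x0G, x0R, x0A)) := by
  obtain ⟨p, hp⟩ := Option.isSome_iff_exists.mp hs
  obtain ⟨_, hpGR, hstep⟩ := (append_singleton_mem_Lang_iff _ _ _ _).mp hse
  rw [run_δGaRa_of_run_δGRA hp, Option.some_inj] at hpGR
  subst hpGR
  simp only [append_singleton_mem_Lang_iff]
  exact (hA.δGRA_plain_or_del ha hstep).imp
    (fun h => ⟨p, hp, h⟩) (fun ⟨haSa, h⟩ => ⟨haSa, p, hp, h⟩)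

/-- the attack automaton cannot disable events of the supervised
plant: if `s ∈ L(G_a||R_a||A)`, `e ∈ Σ_o` and `se ∈ L(G_a||R_a)`, then either
`se ∈ L(G_a||R_a||A)`, or `e ∈ Σ_a` and `s e_d ∈ L(G_a||R_a||A)`. -/
theorem attacker_cannot_disable
    [Finite S] [Finite XG] [Finite XR] [Finite XA]
    (So Suc Sa : Set S) (hSa : Sa ⊆ So)
    (δG : XG → S → Option XG) (x0G : XG)
    (δR : XR → S → Option XR) (x0R : XR) (hR : IsSupRealization So Suc δR)
    (δA : XA → Ev S → Option XA) (x0A : XA) (hA : IsAttack So Sa δA)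
    (s : List (Ev S)) (a : S) (ha : a ∈ So)
    (hs : s ∈ Lang (δGRA So Sa δG δR δA) (x0G, x0R, x0A))
    (hse : s ++ [Ev.plain a] ∈ Lang (δGaRa Sa δG δR) (x0G, x0R)) :
    s ++ [Ev.plain a] ∈ Lang (δGRA So Sa δG δR δA) (x0G, x0R, x0A) ∨
      (a ∈ Sa ∧ s ++ [Ev.del a] ∈ Lang (δGRA So Sa δG δR δA) (x0G, x0R, x0A)) :=
  attacker_cannot_disable_general So Sa δG x0G δR x0R δA x0A hA s a ha hs hse

end RobustDES
end
end

section
/- Robustness against the all-out attack strategy implies robustness against every attack strategy: let A* be the all-out attack automaton, i.e., the single-state partial finite automaton over Σ_{o,e} whose transition function is defined for every event at its unique state (a self-loop for each e ∈ Σ_{o,e}). If a supervisor realization R is robust with respect to G, X_crit and A*, then for every attack automaton A, R is robust with respect to G, X_crit and A. -/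
attribute [local instance] Classical.propDecidable

noncomputable section

namespace RobustDES

variable {S XG XR XA : Type}

theorem run_map_of_step {X Y E : Type} {δ : X → E → Option X} {δ' : Y → E → Option Y}
    (f : X → Y) (hf : ∀ x e x', δ x e = some x' → δ' (f x) e = some (f x')) :
    ∀ {x : X} {s : List E} {x' : X}, run δ x s = some x' → run δ' (f x) s = some (f x')
  | x, [], x', h => by simp_all [run]
  | x, e :: s, x', h => by
    obtain ⟨y, hy, hrun⟩ := Option.bind_eq_some_iff.mp h
    simp only [run, hf x e y hy, Option.bind_some]
    exact run_map_of_step f hf hrun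

theorem Lang_subset_of_step {X Y E : Type} {δ : X → E → Option X} {δ' : Y → E → Option Y}
    (f : X → Y) (hf : ∀ x e x', δ x e = some x' → δ' (f x) e = some (f x')) (x0 : X) :
    Lang δ x0 ⊆ Lang δ' (f x0) := by
  intro s hs
  obtain ⟨x', hx'⟩ := Option.isSome_iff_exists.mp hs
  simp [Lang, run_map_of_step f hf hx']

/- Forgetting the attacker's state is a simulation: `A*` accepts every event of `Σ_{o,e}`, and
the attacked plant already blocks tagged copies of events outside `Σ_a`. -/
theorem δGRA_allOutδ_of_eq_some (So Sa : Set S) (δG : XG → S → Option XG)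
    (δR : XR → S → Option XR) (δA : XA → Ev S → Option XA)
    (p : XG × XR × XA) (e : Ev S) (p' : XG × XR × XA) (h : δGRA So Sa δG δR δA p e = some p') :
    δGRA So Sa δG δR (allOutδ So Sa) (p.1, p.2.1, ()) e = some (p'.1, p'.2.1, ()) := by
  cases e <;> simp only [δGRA, δGa, allOutδ, inOe] at h ⊢ <;> aesop

theorem robust_allout_implies_robust_general
    (So Sa : Set S) (Xcrit : Set XG)
    (δG : XG → S → Option XG) (x0G : XG)
    (δR : XR → S → Option XR) (x0R : XR)
    (hRob : Robust So Sa Xcrit δG x0G δR x0R (allOutδ So Sa) ()) :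
    ∀ (XA : Type) (_ : Finite XA) (δA : XA → Ev S → Option XA) (x0A : XA),
      IsAttack So Sa δA → Robust So Sa Xcrit δG x0G δR x0R δA x0A := by
  intro XA _ δA x0A _ t ht
  exact hRob t <| Lang_subset_of_step (fun p => (p.1, p.2.1, ()))
    (δGRA_allOutδ_of_eq_some So Sa δG δR δA) (x0G, x0R, x0A) ht

/-- a supervisor robust against the all-out attack strategy is
robust against every attack strategy. -/
theorem robust_allout_implies_robust
    [Finite S] [Finite XG] [Finite XR]
    (So Suc Sa : Set S) (hSa : Sa ⊆ So) (Xcrit : Set XG)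
    (δG : XG → S → Option XG) (x0G : XG)
    (δR : XR → S → Option XR) (x0R : XR) (hR : IsSupRealization So Suc δR)
    (hRob : Robust So Sa Xcrit δG x0G δR x0R (allOutδ So Sa) ()) :
    ∀ (XA : Type) (_ : Finite XA) (δA : XA → Ev S → Option XA) (x0A : XA),
      IsAttack So Sa δA → Robust So Sa Xcrit δG x0G δR x0R δA x0A :=
  robust_allout_implies_robust_general So Sa Xcrit δG x0G δR x0R hRob

end RobustDES
end
end

section
/- Equation (19): for every s ∈ L(G_a||R_a||A), the control decision of R after the supervisor's observation of s equals the set of legitimate events active in R_a after s, i.e., C_R(P_{ΣΣo}(P^S(s))) = Γ_{R_a}(δ_{R_a}(x_{0,R}, s)) ∩ Σ, where δ_{R_a}(x_{0,R}, s) denotes the R_a-component of the state reached by s in G_a||R_a||A. -/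
attribute [local instance] Classical.propDecidable

noncomputable section

namespace RobustDES

variable {S XG XR XA : Type}

/-! The `R_a`-component of a run of `G_a ‖ R_a ‖ A` is a run of `R_a`, and `R_a`, read
through `P_{ΣΣo} ∘ P^S`, moves exactly like `Δ_R`: an inserted `a_i` is seen as `a` and
moves `R` when `a` is enabled, a deleted `a_d` is invisible and leaves `R` in place, and an
event erased by `P_{ΣΣo}` is a self-loop of the realization. So the `R_a`-state reached by
`s` is `Δ_R(x_{0,R}, P_{ΣΣo}(P^S(s)))`, whose legitimate active events form `C_R`. -/

section SupervisorTracking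

variable {So Sa : Set S} {δG : XG → S → Option XG} {δR : XR → S → Option XR}
  {δA : XA → Ev S → Option XA}

lemma δRa_eq_some_of_δGRA_eq_some {p q : XG × XR × XA} {e : Ev S}
    (h : δGRA So Sa δG δR δA p e = some q) : δRa Sa δR p.2.1 e = some q.2.1 := by
  cases e with
  | plain a =>
    by_cases ha : a ∈ So <;> simp only [δGRA, ha, if_true, if_false] at h <;> split at h <;>
      first | (cases h; assumption) | simp at h
  | ins a | del a =>
    simp only [δGRA] at h
    split at h <;> first | (cases h; assumption) | simp at h

lemma run_δRa_of_run_δGRA (s : List (Ev S)) {p q : XG × XR × XA}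
    (h : run (δGRA So Sa δG δR δA) p s = some q) : run (δRa Sa δR) p.2.1 s = some q.2.1 := by
  induction s generalizing p with
  | nil => simpa [run] using congrArg (Option.map fun r => r.2.1) h
  | cons e s ih =>
    obtain ⟨r, he, hs⟩ := Option.bind_eq_some_iff.mp h
    exact Option.bind_eq_some_iff.mpr ⟨r.2.1, δRa_eq_some_of_δGRA_eq_some he, ih hs⟩

lemma ΔRrun_append (y : XR) (s t : List S) :
    ΔRrun δR y (s ++ t) = ΔRrun δR (ΔRrun δR y s) t := by
  induction s generalizing y with
  | nil => rfl
  | cons e s ih => exact ih _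

lemma ΔRrun_projOn_singleton
    (hloop : ∀ x e, e ∉ So → (δR x e).isSome → δR x e = some x) (y : XR) (a : S) :
    ΔRrun δR y (projOn So [a]) = (δR y a).getD y := by
  by_cases ha : a ∈ So
  · simp [projOn, ha, ΔRrun]
  · cases hy : δR y a with
    | none => simp [projOn, ha, ΔRrun]
    | some y' =>
      have := hloop y a ha (by simp [hy])
      simp_all [projOn, ΔRrun]

lemma ΔRrun_projOn_PSproj_of_δRa_eq_some
    (hloop : ∀ x e, e ∉ So → (δR x e).isSome → δR x e = some x)
    {y y' : XR} {e : Ev S} (he : δRa Sa δR y e = some y') :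
    ΔRrun δR y (projOn So (PSproj [e])) = y' := by
  cases e with
  | plain a =>
    simp only [PSproj, List.flatMap_singleton, ΔRrun_projOn_singleton hloop]
    rw [show δR y a = some y' from he]
    rfl
  | ins a =>
    simp only [PSproj, List.flatMap_singleton, ΔRrun_projOn_singleton hloop]
    cases hy : δR y a <;> simp_all [δRa]
  | del a =>
    have hy : y = y' := by
      simp only [δRa] at he
      split_ifs at he
      simp_all
    simp [PSproj, projOn, ΔRrun, hy]

lemma ΔRrun_projOn_PSproj_of_run_δRa
    (hloop : ∀ x e, e ∉ So → (δR x e).isSome → δR x e = some x)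
    (s : List (Ev S)) {y y' : XR} (hs : run (δRa Sa δR) y s = some y') :
    ΔRrun δR y (projOn So (PSproj s)) = y' := by
  induction s generalizing y with
  | nil => simpa [run, PSproj, projOn, ΔRrun] using hs
  | cons e s ih =>
    obtain ⟨y₁, he, hs⟩ := Option.bind_eq_some_iff.mp hs
    have hsplit : projOn So (PSproj (e :: s)) =
        projOn So (PSproj [e]) ++ projOn So (PSproj s) := by
      simp [PSproj, projOn]
    rw [hsplit, ΔRrun_append, ΔRrun_projOn_PSproj_of_δRa_eq_some hloop he, ih hs]

end SupervisorTracking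

theorem control_decision_eq_active_legitimate_general
    (So Suc Sa : Set S)
    (δG : XG → S → Option XG) (x0G : XG)
    (δR : XR → S → Option XR) (x0R : XR) (hR : IsSupRealization So Suc δR)
    (δA : XA → Ev S → Option XA) (x0A : XA)
    (s : List (Ev S)) (x : XG) (y : XR) (z : XA)
    (h : run (δGRA So Sa δG δR δA) (x0G, x0R, x0A) s = some (x, y, z)) :
    CR δR x0R (projOn So (PSproj s)) = {a | (δRa Sa δR y (Ev.plain a)).isSome} := by
  have hobs : ΔRrun δR x0R (projOn So (PSproj s)) = y :=
    ΔRrun_projOn_PSproj_of_run_δRa hR.2 s (run_δRa_of_run_δGRA s h)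
  simp only [CR, hobs]
  rfl

/-- Equation (19): for every `s ∈ L(G_a||R_a||A)`,
`C_R(P_{ΣΣo}(P^S(s))) = Γ_{R_a}(δ_{R_a}(x_{0,R}, s)) ∩ Σ`, where
`δ_{R_a}(x_{0,R}, s)` is the `R_a`-component of the state reached by `s`. -/
theorem control_decision_eq_active_legitimate
    [Finite S] [Finite XG] [Finite XR] [Finite XA]
    (So Suc Sa : Set S) (hSa : Sa ⊆ So)
    (δG : XG → S → Option XG) (x0G : XG)
    (δR : XR → S → Option XR) (x0R : XR) (hR : IsSupRealization So Suc δR)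
    (δA : XA → Ev S → Option XA) (x0A : XA) (hA : IsAttack So Sa δA)
    (s : List (Ev S)) (x : XG) (y : XR) (z : XA)
    (h : run (δGRA So Sa δG δR δA) (x0G, x0R, x0A) s = some (x, y, z)) :
    CR δR x0R (projOn So (PSproj s)) = {a | (δRa Sa δR y (Ev.plain a)).isSome} :=
  control_decision_eq_active_legitimate_general So Suc Sa δG x0G δR x0R hR δA x0A s x y z h
end RobustDES
end
end

section
/- Equation (20), recursive characterization of the attacked state estimate: for every s ∈ P_{Σ_mΣ_{o,e}}(L(G_a||R_a||A)) and e ∈ Σ_{o,e} with se ∈ P_{Σ_mΣ_{o,e}}(L(G_a||R_a||A)), one has RE(se) = {x ∈ X_G : x = δ_{G_a}(δ_{G_a}(RE(s), e), t) for some t ∈ (Σ_uo ∩ Γ_{R_a}(δ_{R_a}(x_{0,R}, se)))*}, where δ_{G_a}(Q,u) = {δ_{G_a}(x,u) : x ∈ Q, δ_{G_a}(x,u) is defined} for a set of states Q. -/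
attribute [local instance] Classical.propDecidable

noncomputable section

namespace RobustDES

variable {S XG XR XA : Type}

/-! Along a run of `G_a ‖ R_a ‖ A` the plant follows the whole string, while the supervisor and
the attacker follow only its observable projection, because `R` self-loops on its enabled
unobservable events. So all traces observed as `s` leave `R_a` and `A` in the same states, and a
trace observed as `s e` is a trace observed as `s`, then `e`, then an unobservable tail, which is
feasible exactly when each of its events is enabled at `δ_{R_a}(x_{0,R}, s e)`. -/

section Runs

variable {X E : Type} {δ : X → E → Option X}

lemma run_cons_eq_some {x z : X} {a : E} {t : List E} :
    run δ x (a :: t) = some z ↔ ∃ y, δ x a = some y ∧ run δ y t = some z :=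
  Option.bind_eq_some_iff

@[simp]
lemma run_singleton (x : X) (a : E) : run δ x [a] = δ x a := by
  simp [run]

lemma run_append_eq_some {x z : X} {u v : List E} :
    run δ x (u ++ v) = some z ↔ ∃ y, run δ x u = some y ∧ run δ y v = some z := by
  induction u generalizing x with
  | nil => simp [run]
  | cons a u ih =>
    simp only [List.cons_append, run_cons_eq_some, ih]
    exact ⟨fun ⟨y, hy, w, hw, hz⟩ => ⟨w, ⟨y, hy, hw⟩, hz⟩,
      fun ⟨w, ⟨y, hy, hw⟩, hz⟩ => ⟨y, hy, w, hw, hz⟩⟩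

lemma mem_Lang_iff {x0 : X} {s : List E} : s ∈ Lang δ x0 ↔ ∃ x, run δ x0 s = some x :=
  Option.isSome_iff_exists

end Runs

section Projection

variable {So : Set S}

lemma projOe_append (u v : List (Ev S)) :
    projOe So (u ++ v) = projOe So u ++ projOe So v :=
  List.flatMap_append ..

lemma projOe_cons (b : Ev S) (v : List (Ev S)) :
    projOe So (b :: v) = projOe So [b] ++ projOe So v :=
  projOe_append [b] v

lemma projOe_singleton_of_inOe {Sa : Set S} {e : Ev S} (he : inOe So Sa e) :
    projOe So [e] = [e] := by
  rcases e with a | a | a <;> simp_all [projOe, inOe]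

lemma projOe_map_plain_eq_nil {t : List S} (ht : ∀ a ∈ t, a ∉ So) :
    projOe So (t.map Ev.plain) = [] := by
  simp only [projOe, List.flatMap_map, List.flatMap_eq_nil_iff]
  intro a ha
  simp [ht a ha]

lemma projOe_singleton_eq_nil_or (b : Ev S) :
    (∃ a, b = Ev.plain a ∧ a ∉ So) ∨ projOe So [b] = [b] := by
  rcases b with a | a | a
  · by_cases ha : a ∈ So <;> simp [projOe, ha]
  all_goals simp [projOe]

lemma eq_append_cons_of_projOe_eq_append_singleton {w s : List (Ev S)} {e : Ev S}
    (h : projOe So w = s ++ [e]) :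
    ∃ (u : List (Ev S)) (t : List S),
      w = u ++ e :: t.map Ev.plain ∧ projOe So u = s ∧ ∀ a ∈ t, a ∉ So := by
  induction w using List.reverseRecOn generalizing s with
  | nil => simp [projOe] at h
  | append_singleton w b ih =>
    rw [projOe_append] at h
    rcases projOe_singleton_eq_nil_or (So := So) b with ⟨a, rfl, ha⟩ | hb
    · obtain ⟨u, t, rfl, hu, ht⟩ := ih (by simpa [projOe, ha] using h)
      refine ⟨u, t ++ [a], by simp, hu, ?_⟩
      simp only [List.mem_append, List.mem_singleton]
      rintro c (hc | rfl)
      exacts [ht c hc, ha]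
    · rw [hb] at h
      obtain ⟨hw, hbe⟩ := List.append_inj' h rfl
      obtain rfl : b = e := by simpa using hbe
      exact ⟨w, [], by simp, hw, by simp⟩

end Projection

def UnobsSelfLoops (So : Set S) (δR : XR → S → Option XR) : Prop :=
  ∀ y a, a ∉ So → (δR y a).isSome → δR y a = some y

def nextEstimate (So Sa : Set S) (δG : XG → S → Option XG) (δR : XR → S → Option XR)
    (y : XR) (e : Ev S) (Q : Set XG) : Set XG :=
  {x | ∃ x1 ∈ Q, ∃ x2, δGa Sa δG x1 e = some x2 ∧
    ∃ t : List S, (∀ a ∈ t, a ∉ So ∧ (δRa Sa δR y (Ev.plain a)).isSome) ∧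
      run (δGa Sa δG) x2 (t.map Ev.plain) = some x}

section Composition

variable {So Sa : Set S} {δG : XG → S → Option XG} {δR : XR → S → Option XR}
  {δA : XA → Ev S → Option XA}

-- `projOe So [e]` is `[e]` or `[]`: the clause covers both the moving and the idle attacker.
lemma δGRA_eq_some_iff {x x' : XG} {y y' : XR} {z z' : XA} {e : Ev S} :
    δGRA So Sa δG δR δA (x, y, z) e = some (x', y', z') ↔
      δGa Sa δG x e = some x' ∧ δRa Sa δR y e = some y' ∧
        run δA z (projOe So [e]) = some z' := by
  rcases e with a | a | a
  · by_cases ha : a ∈ So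
    · simp only [δGRA, if_pos ha, projOe, List.flatMap_singleton, run]
      cases δGa Sa δG x (.plain a) <;> cases δRa Sa δR y (.plain a) <;>
        cases δA z (.plain a) <;> simp
    · simp only [δGRA, if_neg ha, projOe, List.flatMap_singleton, run]
      cases δGa Sa δG x (.plain a) <;> cases δRa Sa δR y (.plain a) <;> simp [eq_comm]
  all_goals
    simp only [δGRA, projOe, List.flatMap_singleton, run]
    cases δGa Sa δG x _ <;> cases δRa Sa δR y _ <;> cases δA z _ <;> simp

lemma run_fst_of_run_δGRA {t : List (Ev S)} {x x' : XG} {y y' : XR} {z z' : XA}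
    (h : run (δGRA So Sa δG δR δA) (x, y, z) t = some (x', y', z')) :
    run (δGa Sa δG) x t = some x' := by
  induction t generalizing x y z with
  | nil => cases h; rfl
  | cons e t ih =>
    obtain ⟨⟨x1, y1, z1⟩, hstep, hrest⟩ := run_cons_eq_some.mp h
    exact run_cons_eq_some.mpr ⟨x1, (δGRA_eq_some_iff.mp hstep).1, ih hrest⟩

lemma run_δRa_projOe_singleton
    (hloop : UnobsSelfLoops So δR) {y y' : XR} {e : Ev S}
    (h : δRa Sa δR y e = some y') : run (δRa Sa δR) y (projOe So [e]) = some y' := by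
  rcases projOe_singleton_eq_nil_or (So := So) e with ⟨a, rfl, ha⟩ | he
  · have hy : δR y a = some y' := h
    rw [hloop y a ha (by simp [hy])] at hy
    simpa [projOe, ha, run] using hy
  · simpa [he, run] using h

lemma run_projOe_of_run_δGRA (hloop : UnobsSelfLoops So δR)
    {t : List (Ev S)} {x x' : XG} {y y' : XR} {z z' : XA}
    (h : run (δGRA So Sa δG δR δA) (x, y, z) t = some (x', y', z')) :
    run (δRa Sa δR) y (projOe So t) = some y' ∧ run δA z (projOe So t) = some z' := by
  induction t generalizing x y z with
  | nil => cases h; exact ⟨rfl, rfl⟩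
  | cons e t ih =>
    obtain ⟨⟨x1, y1, z1⟩, hstep, hrest⟩ := run_cons_eq_some.mp h
    obtain ⟨-, hy1, hz1⟩ := δGRA_eq_some_iff.mp hstep
    obtain ⟨hy', hz'⟩ := ih hrest
    rw [projOe_cons, run_append_eq_some, run_append_eq_some]
    exact ⟨⟨y1, run_δRa_projOe_singleton hloop hy1, hy'⟩, ⟨z1, hz1, hz'⟩⟩

lemma run_δGRA_map_plain_eq_some_iff (hloop : UnobsSelfLoops So δR)
    {t : List S} (ht : ∀ a ∈ t, a ∉ So)
    {x x' : XG} {y y' : XR} {z z' : XA} :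
    run (δGRA So Sa δG δR δA) (x, y, z) (t.map Ev.plain) = some (x', y', z') ↔
      run (δGa Sa δG) x (t.map Ev.plain) = some x' ∧ y' = y ∧ z' = z ∧
        ∀ a ∈ t, (δR y a).isSome := by
  induction t generalizing x with
  | nil =>
    simp only [List.map_nil, run, Option.some.injEq, Prod.mk.injEq, List.not_mem_nil,
      IsEmpty.forall_iff, implies_true, and_true]
    constructor <;> rintro ⟨rfl, rfl, rfl⟩ <;> exact ⟨rfl, rfl, rfl⟩
  | cons a t ih =>
    have ha : a ∉ So := ht a List.mem_cons_self
    have ht' : ∀ b ∈ t, b ∉ So := fun b hb => ht b (List.mem_cons_of_mem a hb)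
    have hdrop : projOe So [Ev.plain a] = [] := by simp [projOe, ha]
    simp only [List.map_cons, run_cons_eq_some, Prod.exists, δGRA_eq_some_iff, hdrop,
      List.forall_mem_cons]
    constructor
    · rintro ⟨x1, y1, z1, ⟨hx1, hy1, ⟨⟩⟩, hrest⟩
      have hy1' : δR y a = some y1 := hy1
      obtain rfl : y1 = y := Option.some.inj (hy1'.symm.trans (hloop y a ha (by simp [hy1'])))
      obtain ⟨hrun, rfl, rfl, hen⟩ := (ih ht').mp hrest
      exact ⟨⟨x1, hx1, hrun⟩, rfl, rfl, by simp [hy1'], hen⟩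
    · rintro ⟨⟨x1, hx1, hrun⟩, hy', hz', hy, hen⟩
      exact ⟨x1, y, z, ⟨hx1, hloop y a ha hy, rfl⟩, (ih ht').mpr ⟨hrun, hy', hz', hen⟩⟩

lemma mem_RE_iff {x0G : XG} {x0R : XR} {x0A : XA} {s : List (Ev S)} {x : XG} :
    x ∈ RE So Sa δG x0G δR x0R δA x0A s ↔
      ∃ u y z, projOe So u = s ∧
        run (δGRA So Sa δG δR δA) (x0G, x0R, x0A) u = some (x, y, z) := by
  constructor
  · rintro ⟨u, hu, hlang, hx⟩
    obtain ⟨⟨x', y, z⟩, hp⟩ := mem_Lang_iff.mp hlang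
    obtain rfl : x = x' := Option.some.inj (hx.symm.trans (run_fst_of_run_δGRA hp))
    exact ⟨u, y, z, hu, hp⟩
  · rintro ⟨u, y, z, hu, hp⟩
    exact ⟨u, hu, mem_Lang_iff.mpr ⟨_, hp⟩, run_fst_of_run_δGRA hp⟩

lemma run_δA_of_mem_image_projOe
    (hloop : UnobsSelfLoops So δR)
    {x0G : XG} {x0R : XR} {x0A : XA} {s : List (Ev S)}
    (hs : s ∈ projOe So '' Lang (δGRA So Sa δG δR δA) (x0G, x0R, x0A)) :
    ∃ z, run δA x0A s = some z := by
  obtain ⟨w, hw, rfl⟩ := hs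
  obtain ⟨⟨_, _, z⟩, hp⟩ := mem_Lang_iff.mp hw
  exact ⟨z, (run_projOe_of_run_δGRA hloop hp).2⟩

lemma RE_append_singleton_subset
    (hloop : UnobsSelfLoops So δR)
    {x0G : XG} {x0R : XR} {x0A : XA} {s : List (Ev S)} {e : Ev S} {y : XR}
    (hy : run (δRa Sa δR) x0R (s ++ [e]) = some y) :
    RE So Sa δG x0G δR x0R δA x0A (s ++ [e]) ⊆
      nextEstimate So Sa δG δR y e (RE So Sa δG x0G δR x0R δA x0A s) := by
  intro x hx
  obtain ⟨w, y', z', hw, hrun⟩ := mem_RE_iff.mp hx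
  obtain ⟨u, t, rfl, hu, ht⟩ := eq_append_cons_of_projOe_eq_append_singleton hw
  obtain ⟨⟨x1, y1, z1⟩, hrun_u, hrun_et⟩ := run_append_eq_some.mp hrun
  obtain ⟨⟨x2, y2, z2⟩, hstep, hrun_t⟩ := run_cons_eq_some.mp hrun_et
  obtain ⟨hx2, hy2, -⟩ := δGRA_eq_some_iff.mp hstep
  obtain ⟨hx, -, -, hen⟩ := (run_δGRA_map_plain_eq_some_iff hloop ht).mp hrun_t
  have hy1 := (run_projOe_of_run_δGRA hloop hrun_u).1
  rw [hu] at hy1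
  obtain rfl : y2 = y := Option.some.inj <| hy ▸
    (run_append_eq_some.mpr ⟨y1, hy1, by simpa using hy2⟩).symm
  exact ⟨x1, mem_RE_iff.mpr ⟨u, y1, z1, hu, hrun_u⟩, x2, hx2, t,
    fun a ha => ⟨ht a ha, hen a ha⟩, hx⟩

lemma subset_RE_append_singleton
    (hloop : UnobsSelfLoops So δR)
    {x0G : XG} {x0R : XR} {x0A : XA} {s : List (Ev S)} {e : Ev S} (he : inOe So Sa e)
    {y : XR} (hy : run (δRa Sa δR) x0R (s ++ [e]) = some y)
    {z : XA} (hz : run δA x0A (s ++ [e]) = some z) :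
    nextEstimate So Sa δG δR y e (RE So Sa δG x0G δR x0R δA x0A s) ⊆
      RE So Sa δG x0G δR x0R δA x0A (s ++ [e]) := by
  rintro x ⟨x1, hx1, x2, hx2, t, ht, hx⟩
  obtain ⟨u, y1, z1, hu, hrun_u⟩ := mem_RE_iff.mp hx1
  obtain ⟨hy1, hz1⟩ := run_projOe_of_run_δGRA hloop hrun_u
  rw [hu] at hy1 hz1
  obtain ⟨_, hy1', hye⟩ := run_append_eq_some.mp hy
  obtain rfl := Option.some.inj (hy1.symm.trans hy1')
  obtain ⟨_, hz1', hze⟩ := run_append_eq_some.mp hz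
  obtain rfl := Option.some.inj (hz1.symm.trans hz1')
  have hkeep := projOe_singleton_of_inOe he
  have hstep : δGRA So Sa δG δR δA (x1, y1, z1) e = some (x2, y, z) :=
    δGRA_eq_some_iff.mpr ⟨hx2, by simpa using hye, by rwa [hkeep]⟩
  have htail : run (δGRA So Sa δG δR δA) (x2, y, z) (t.map Ev.plain) = some (x, y, z) :=
    (run_δGRA_map_plain_eq_some_iff hloop fun a ha => (ht a ha).1).mpr
      ⟨hx, rfl, rfl, fun a ha => (ht a ha).2⟩
  refine mem_RE_iff.mpr ⟨u ++ e :: t.map Ev.plain, y, z, ?_,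
    run_append_eq_some.mpr ⟨_, hrun_u, run_cons_eq_some.mpr ⟨_, hstep, htail⟩⟩⟩
  rw [projOe_append, projOe_cons, hu, hkeep, projOe_map_plain_eq_nil fun a ha => (ht a ha).1,
    List.append_nil]

end Composition

theorem RE_recursion_general
    (So Suc Sa : Set S)
    (δG : XG → S → Option XG) (x0G : XG)
    (δR : XR → S → Option XR) (x0R : XR) (hR : IsSupRealization So Suc δR)
    (δA : XA → Ev S → Option XA) (x0A : XA)
    (s : List (Ev S)) (e : Ev S) (he : inOe So Sa e)
    (hse : s ++ [e] ∈ projOe So '' Lang (δGRA So Sa δG δR δA) (x0G, x0R, x0A)) :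
    ∀ y, run (δRa Sa δR) x0R (s ++ [e]) = some y →
      RE So Sa δG x0G δR x0R δA x0A (s ++ [e]) =
        {x | ∃ x1 ∈ RE So Sa δG x0G δR x0R δA x0A s, ∃ x2,
          δGa Sa δG x1 e = some x2 ∧
          ∃ t : List S, (∀ a ∈ t, a ∉ So ∧ (δRa Sa δR y (Ev.plain a)).isSome) ∧
            run (δGa Sa δG) x2 (t.map Ev.plain) = some x} := by
  intro y hy
  obtain ⟨z, hz⟩ := run_δA_of_mem_image_projOe hR.2 hse
  exact (RE_append_singleton_subset hR.2 hy).antisymm (subset_RE_append_singleton hR.2 he hy hz)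

/-- Equation (20): recursive characterization of the attacked
state estimate: `RE(se) = {x : x = δ_{G_a}(δ_{G_a}(RE(s),e), t),
t ∈ (Σ_uo ∩ Γ_{R_a}(δ_{R_a}(x_{0,R}, se)))*}`. -/
theorem RE_recursion
    [Finite S] [Finite XG] [Finite XR] [Finite XA]
    (So Suc Sa : Set S) (hSa : Sa ⊆ So)
    (δG : XG → S → Option XG) (x0G : XG)
    (δR : XR → S → Option XR) (x0R : XR) (hR : IsSupRealization So Suc δR)
    (δA : XA → Ev S → Option XA) (x0A : XA) (hA : IsAttack So Sa δA)
    (s : List (Ev S)) (e : Ev S) (he : inOe So Sa e)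
    (hs : s ∈ projOe So '' Lang (δGRA So Sa δG δR δA) (x0G, x0R, x0A))
    (hse : s ++ [e] ∈ projOe So '' Lang (δGRA So Sa δG δR δA) (x0G, x0R, x0A)) :
    ∀ y, run (δRa Sa δR) x0R (s ++ [e]) = some y →
      RE So Sa δG x0G δR x0R δA x0A (s ++ [e]) =
        {x | ∃ x1 ∈ RE So Sa δG x0G δR x0R δA x0A s, ∃ x2,
          δGa Sa δG x1 e = some x2 ∧
          ∃ t : List S, (∀ a ∈ t, a ∉ So ∧ (δRa Sa δR y (Ev.plain a)).isSome) ∧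
            run (δGa Sa δG) x2 (t.map Ev.plain) = some x} :=
  RE_recursion_general So Suc Sa δG x0G δR x0R hR δA x0A s e he hse

end RobustDES
end
end
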